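/- The Belnap–Dunn matrix M^BD is a simple matrix: for all truth values a₁, a₂ ∈ {t, f, b, n} with a₁ ≠ a₂, there is a unary matrix function f of M^BD (a composition of the interpretations of ¬, ∧, ∨ and projections) such that exactly one of f(a₁), f(a₂) is designated. -/

import Mathlib

namespace BD5

/-- The four truth values of Belnap-Dunn logic:
`t` (true), `f` (false), `b` (both true and false), `n` (neither true nor false). -/
inductive V4 : Type
  | t | f | b | n
deriving DecidableEq, Repr

namespace V4

/-- `a` lies above truth in the Belnap-Dunn bilattice (i.e. `a ∈ {t, b}`). -/
def hasT : V4 → Bool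
  | t => true
  | b => true
  | _ => false

/-- `a` lies above falsity in the Belnap-Dunn bilattice (i.e. `a ∈ {f, b}`). -/
def hasF : V4 → Bool
  | f => true
  | b => true
  | _ => false

def ofTF : Bool → Bool → V4
  | true, true => b
  | true, false => t
  | false, true => f
  | false, false => n

/-- Interpretation of ¬: swaps `t` and `f`, fixes `b` and `n`. -/
def neg4 : V4 → V4
  | t => f
  | f => t
  | b => b
  | n => n

/-- Interpretation of ∧: greatest lower bound in the lattice order on `V4`
with `f` least, `t` greatest, `b` and `n` incomparable. -/
def and4 (x y : V4) : V4 := ofTF (x.hasT && y.hasT) (x.hasF || y.hasF)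

/-- Interpretation of ∨: least upper bound in the lattice order on `V4`
with `f` least, `t` greatest, `b` and `n` incomparable. -/
def or4 (x y : V4) : V4 := ofTF (x.hasT || y.hasT) (x.hasF && y.hasF)

/-- Interpretation of →: `a₁ → a₂ = t` if `a₁ ∉ {t, b}`, and `a₂` otherwise. -/
def imp4 (x y : V4) : V4 := if x = t ∨ x = b then y else t

/-- The designated truth values: `t` and `b`. -/
def desig (x : V4) : Prop := x = t ∨ x = b

end V4

/-- The unary matrix functions of the Belnap-Dunn matrix `M^BD`: the unary
functions on the truth values obtainable by composition from the interpretations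
of ¬, ∧, ∨ and projections. -/
inductive IsUnaryMF : (V4 → V4) → Prop
  | id : IsUnaryMF (fun a => a)
  | neg {g : V4 → V4} : IsUnaryMF g → IsUnaryMF (fun a => V4.neg4 (g a))
  | and {g h : V4 → V4} : IsUnaryMF g → IsUnaryMF h →
      IsUnaryMF (fun a => V4.and4 (g a) (h a))
  | or {g h : V4 → V4} : IsUnaryMF g → IsUnaryMF h →
      IsUnaryMF (fun a => V4.or4 (g a) (h a))

/- Two distinct truth values are already told apart by one of `a`, `a ∧ ¬a`, `a ∨ ¬a`:
a truth value is determined by which of these three are designated. -/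

instance : DecidablePred V4.desig := fun x => inferInstanceAs (Decidable (x = V4.t ∨ x = V4.b))

open V4

theorem IsUnaryMF.and_neg_self : IsUnaryMF fun a => and4 a (neg4 a) := .and .id (.neg .id)

theorem IsUnaryMF.or_neg_self : IsUnaryMF fun a => or4 a (neg4 a) := .or .id (.neg .id)

theorem V4.desig_and4_neg4_self_iff (a : V4) : desig (and4 a (neg4 a)) ↔ a = b := by
  cases a <;> decide

theorem V4.desig_or4_neg4_self_iff (a : V4) : desig (or4 a (neg4 a)) ↔ a ≠ n := by
  cases a <;> decide

theorem V4.eq_of_forall_isUnaryMF_desig_iff {a a' : V4}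
    (h : ∀ g, IsUnaryMF g → (desig (g a) ↔ desig (g a'))) : a = a' := by
  have hid := h _ .id
  have hand := h _ .and_neg_self
  have hor := h _ .or_neg_self
  simp only [desig_and4_neg4_self_iff, desig_or4_neg4_self_iff] at hand hor
  cases a <;> cases a' <;> simp_all [desig]

/-- the Belnap-Dunn matrix is simple: any two distinct truth
values are separated by a unary matrix function, i.e. for all `a₁ ≠ a₂` there
is a unary matrix function `g` such that exactly one of `g a₁`, `g a₂` is
designated. -/
theorem stmt5 :
    ∀ a₁ a₂ : V4, a₁ ≠ a₂ →
      ∃ g : V4 → V4, IsUnaryMF g ∧ Xor' (V4.desig (g a₁)) (V4.desig (g a₂)) := by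
  intro a₁ a₂ hne
  by_contra! hsep
  exact hne (eq_of_forall_isUnaryMF_desig_iff fun g hg => (not_xor _ _).mp (hsep g hg))

end BD5
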